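/- arXiv:1605.04276 — 3 statements merged into one kernel-verified Lean document; each statement's English description precedes it below -/
import Mathlib

section
/- The alternating group A6 is not (2,3)-generated: no pair of elements of orders 2 and 3 generates A6. -/
/-!
Up to conjugacy in `S₆` an element `y` of order 3 is `(0 1 2)` or `(0 1 2)(3 4 5)`, and an even
involution `x` is a double transposition. If `y = (0 1 2)`, then `x` fixes one of `3, 4, 5`, or else
one of its transpositions lies inside `{3, 4, 5}`; so `x` and `y` fix a common point or duad.
The case `y = (0 1 2)(3 4 5)` is the same argument seen through the outer automorphism of `S₆`,
which exchanges the two classes of elements of order 3, fixes the class of double transpositions,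
and carries points to synthematic totals and duads to synthemes: `x` and `y` fix one of the
three synthemes or one of the three totals fixed by `y`. In both cases `⟨x, y⟩` lies in the
stabilizer of a structure moved by the 5-cycle `(1 2 3 4 5) ∈ A₆`, so it is a proper subgroup.
-/

open Equiv Equiv.Perm Pointwise Subgroup

theorem Subgroup.closure_pair_ne_of_smul_eq {G α : Type*} [Group G] [MulAction G α]
    {H : Subgroup G} {x y g : G} {a : α} (hx : x • a = a) (hy : y • a = a) (hg : g ∈ H)
    (hga : g • a ≠ a) : closure {x, y} ≠ H := by
  rintro rfl
  have hle : closure {x, y} ≤ MulAction.stabilizer G a :=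
    (closure_le _).2 <| Set.insert_subset_iff.2 ⟨hx, Set.singleton_subset_iff.2 hy⟩
  exact hga (hle hg)

theorem Subgroup.closure_conj_pair_eq {G : Type*} [Group G] {N : Subgroup G} [N.Normal]
    {x y : G} (h : closure {x, y} = N) (g : G) : closure {g * x * g⁻¹, g * y * g⁻¹} = N := by
  simpa [smul_closure, Set.smul_set_insert, Normal.conj_smul_eq_self] using
    congrArg (MulAut.conj g • ·) h

theorem Equiv.Perm.cycleType_eq_three_or_three_three {α : Type*} [Fintype α] [DecidableEq α]
    (hα : Fintype.card α < 9) {σ : Perm α} (hσ : orderOf σ = 3) :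
    σ.cycleType = {3} ∨ σ.cycleType = {3, 3} := by
  obtain ⟨n, hn⟩ := cycleType_prime_order (hσ ▸ Nat.prime_three)
  rw [hσ] at hn
  have hsum : 3 + n * 3 ≤ Fintype.card α := by simpa [hn] using σ.sum_cycleType_le
  obtain rfl | rfl : n = 0 ∨ n = 1 := by omega
  exacts [.inl hn, .inr hn]

theorem exists_conj_eq_of_orderOf_eq_three {y : Perm (Fin 6)} (hy : orderOf y = 3) :
    ∃ σ : Perm (Fin 6), σ * y * σ⁻¹ = c[0, 1, 2] ∨ σ * y * σ⁻¹ = c[0, 1, 2] * c[3, 4, 5] := by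
  have conj_eq_of_cycleType_eq (y₀ : Perm (Fin 6)) (h : y.cycleType = y₀.cycleType) :
      ∃ σ : Perm (Fin 6), σ * y * σ⁻¹ = y₀ :=
    isConj_iff.1 (isConj_iff_cycleType_eq.2 h)
  rcases cycleType_eq_three_or_three_three (by simp) hy with h | h
  · exact (conj_eq_of_cycleType_eq _ (h.trans (by decide))).imp fun _ => .inl
  · exact (conj_eq_of_cycleType_eq _ (h.trans (by decide))).imp fun _ => .inr

/-- The points `3, 4, 5` (as `{{{p}}}`), the duads inside `{3, 4, 5}` (as `{{d}}`), the synthemes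
fixed by `(0 1 2)(3 4 5)` (as `{s}`) and the synthematic totals fixed by it (as the set of their
five synthemes), all coded in one type so that a single action of `S₆` covers them. -/
def invariantStructures : List (Finset (Finset (Finset (Fin 6)))) :=
  [{{{3}}}, {{{4}}}, {{{5}}}, {{{3, 4}}}, {{{3, 5}}}, {{{4, 5}}},
    {{{0, 3}, {1, 4}, {2, 5}}}, {{{0, 4}, {1, 5}, {2, 3}}}, {{{0, 5}, {1, 3}, {2, 4}}},
    {{{0, 1}, {2, 4}, {3, 5}}, {{0, 2}, {1, 3}, {4, 5}}, {{0, 3}, {1, 4}, {2, 5}},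
      {{0, 4}, {1, 5}, {2, 3}}, {{0, 5}, {1, 2}, {3, 4}}},
    {{{0, 1}, {2, 3}, {4, 5}}, {{0, 2}, {1, 5}, {3, 4}}, {{0, 3}, {1, 4}, {2, 5}},
      {{0, 4}, {1, 2}, {3, 5}}, {{0, 5}, {1, 3}, {2, 4}}},
    {{{0, 1}, {2, 5}, {3, 4}}, {{0, 2}, {1, 4}, {3, 5}}, {{0, 3}, {1, 2}, {4, 5}},
      {{0, 4}, {1, 5}, {2, 3}}, {{0, 5}, {1, 3}, {2, 4}}}]

theorem exists_common_invariantStructure {x y : Perm (Fin 6)}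
    (hy : y = c[0, 1, 2] ∨ y = c[0, 1, 2] * c[3, 4, 5]) (hx : x ^ 2 = 1) (hsign : sign x = 1) :
    ∃ O ∈ invariantStructures,
      x • O = O ∧ y • O = O ∧ (c[1, 2, 3, 4, 5] : Perm (Fin 6)) • O ≠ O := by
  revert x
  rcases hy with rfl | rfl <;> decide +kernel

/-- The alternating group A₆ is not (2,3)-generated. -/
theorem alternatingGroup_six_not_two_three_generated :
    ¬ ∃ x y : alternatingGroup (Fin 6), orderOf x = 2 ∧ orderOf y = 3 ∧
      Subgroup.closure ({x, y} : Set (alternatingGroup (Fin 6))) = ⊤ := by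
  rintro ⟨x, y, hx, hy, hgen⟩
  replace hgen : closure {(x : Perm (Fin 6)), (y : Perm (Fin 6))} = alternatingGroup (Fin 6) := by
    simpa [MonoidHom.map_closure, Set.image_pair, ← MonoidHom.range_eq_map] using
      congrArg (map (alternatingGroup (Fin 6)).subtype) hgen
  obtain ⟨σ, hy₀⟩ := exists_conj_eq_of_orderOf_eq_three (y := y) (by rwa [orderOf_coe])
  obtain ⟨O, -, hxO, hyO, hO⟩ := exists_common_invariantStructure hy₀ (x := σ * x * σ⁻¹)
    (by rw [conj_pow, ← hx, ← orderOf_coe, pow_orderOf_eq_one, mul_one, mul_inv_cancel])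
    (mem_alternatingGroup.1 <| alternatingGroup.normal.conj_mem _ x.2 σ)
  exact closure_pair_ne_of_smul_eq hxO hyO (mem_alternatingGroup.2 (by decide)) hO
    (closure_conj_pair_eq hgen σ)
end

section
/- The permutations η1 = (2,5)(4,8), η2 = (1,6)(4,9), η3 = (1,3)(2,8)(4,9)(5,6) of the set {1,2,3,4,5,6,8,9} generate the full alternating group on {1,2,3,4,5,6,8,9}. -/
/-!
Restrict η₁, η₂, η₃ to Δ. The product η₁η₂η₃ is the 7-cycle (1 3 6 2 4 8 5) fixing 9, and η₂ moves 9,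
so the group they generate is transitive with a point stabiliser transitive on the other seven
points: it is 2-transitive, hence primitive. It also contains the 3-cycle (η₁η₂)² = (4 8 9), so by
Jordan's theorem it contains, and being generated by even permutations equals, the alternating
group of Δ. Extending by the identity off Δ identifies Alt(Δ) with the even permutations of
{1,…,12} fixing 7, 10, 11 and 12.
-/

open Equiv Equiv.Perm MulAction

namespace Equiv.Perm

variable {α : Type*} [Fintype α] [DecidableEq α]

theorem range_ofSubtype_eq_iInf_stabilizer (s : Finset α) :
    (ofSubtype : Perm s →* Perm α).range = ⨅ i ∈ (↑s : Set α)ᶜ, stabilizer (Perm α) i := by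
  ext g
  simp only [mem_range_ofSubtype_iff, Subgroup.mem_iInf, mem_stabilizer_iff]
  constructor
  · intro hg i hi
    by_contra hgi
    exact hi (hg (mem_support.2 hgi))
  · intro hg i hi
    by_contra his
    exact mem_support.1 hi (hg i his)

theorem isMultiplyPretransitive_two_of_isCycle_mem {G : Subgroup (Perm α)} {σ τ : Perm α} {a : α}
    (hσG : σ ∈ G) (hσ : σ.IsCycle) (hσa : σ.support = {a}ᶜ) (hτG : τ ∈ G) (hτa : τ a ≠ a) :
    IsMultiplyPretransitive G α 2 := by
  have hmoves : ∀ {x}, σ x ≠ x ↔ x ≠ a := by simp [← mem_support, hσa]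
  have hfix : ∀ k : ℕ, (σ ^ k) a = a :=
    pow_apply_eq_self_of_apply_eq_self (notMem_support.1 (by simp [hσa]))
  have to_a : ∀ x, ∃ g ∈ G, g x = a := by
    intro x
    by_cases hx : x = a
    · exact ⟨1, one_mem G, hx⟩
    · obtain ⟨k, hk⟩ := hσ.exists_pow_eq (y := τ⁻¹ a) (hmoves.2 hx)
        (hmoves.2 (by rwa [Ne, inv_eq_iff_eq, eq_comm]))
      exact ⟨τ * σ ^ k, mul_mem hτG (pow_mem hσG k), by simp [hk]⟩
  have to_base : ∀ {x y}, x ≠ y → ∃ g ∈ G, g x = a ∧ g y = τ a := by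
    intro x y hxy
    obtain ⟨g, hgG, hgx⟩ := to_a x
    have hgy : g y ≠ a := hgx ▸ g.injective.ne hxy.symm
    obtain ⟨k, hk⟩ := hσ.exists_pow_eq (hmoves.2 hgy) (hmoves.2 hτa)
    exact ⟨σ ^ k * g, mul_mem (pow_mem hσG k) hgG, by simp [hgx, hfix], by simp [hk]⟩
  rw [is_two_pretransitive_iff]
  intro x y z w hxy hzw
  obtain ⟨g, hgG, hgx, hgy⟩ := to_base hxy
  obtain ⟨h, hhG, hhz, hhw⟩ := to_base hzw
  refine ⟨⟨h⁻¹ * g, mul_mem (inv_mem hhG) hgG⟩, ?_, ?_⟩ <;>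
    simp [Subgroup.smul_def, symm_apply_eq, hgx, hgy, hhz, hhw]

end Equiv.Perm

namespace Delta

def Δ : Finset (Fin 12) := {1, 2, 3, 4, 5, 6, 8, 9}

def η₁ : Perm Δ := ([(2 : Fin 12), 5].formPerm * [(4 : Fin 12), 8].formPerm).subtypePerm (by decide)

def η₂ : Perm Δ := ([(1 : Fin 12), 6].formPerm * [(4 : Fin 12), 9].formPerm).subtypePerm (by decide)

def η₃ : Perm Δ :=
  ([(1 : Fin 12), 3].formPerm * [(2 : Fin 12), 8].formPerm * [(4 : Fin 12), 9].formPerm *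
    [(5 : Fin 12), 6].formPerm).subtypePerm (by decide)

theorem image_ofSubtype_η :
    ofSubtype '' ({η₁, η₂, η₃} : Set (Perm Δ)) =
      {[(2 : Fin 12), 5].formPerm * [(4 : Fin 12), 8].formPerm,
        [(1 : Fin 12), 6].formPerm * [(4 : Fin 12), 9].formPerm,
        [(1 : Fin 12), 3].formPerm * [(2 : Fin 12), 8].formPerm *
          [(4 : Fin 12), 9].formPerm * [(5 : Fin 12), 6].formPerm} := by
  simp only [Set.image_insert_eq, Set.image_singleton, η₁, η₂, η₃]
  rw [ofSubtype_subtypePerm _ (by decide), ofSubtype_subtypePerm _ (by decide),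
    ofSubtype_subtypePerm _ (by decide)]

theorem coe_Δ_compl : ((↑Δ : Set (Fin 12))ᶜ) = {7, 10, 11, 12} := by
  ext x
  fin_cases x <;> simp [Δ]

theorem isThreeCycle_η₁_mul_η₂_sq : ((η₁ * η₂) ^ 2).IsThreeCycle := by
  rw [← card_support_eq_three_iff]
  decide

theorem support_η₁_mul_η₂_mul_η₃ : (η₁ * η₂ * η₃).support = {⟨9, by decide⟩}ᶜ := by
  decide

set_option maxRecDepth 10000 in
theorem isCycle_η₁_mul_η₂_mul_η₃ : (η₁ * η₂ * η₃).IsCycle := by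
  have : Fact (Nat.Prime 7) := ⟨Nat.prime_seven⟩
  have h7 : orderOf (η₁ * η₂ * η₃) = 7 := orderOf_eq_prime (by decide) (by decide)
  exact isCycle_of_prime_order' (h7 ▸ Nat.prime_seven) (by rw [h7]; decide)

theorem closure_η_eq_alternatingGroup :
    Subgroup.closure ({η₁, η₂, η₃} : Set (Perm Δ)) = alternatingGroup Δ := by
  set G := Subgroup.closure ({η₁, η₂, η₃} : Set (Perm Δ))
  have h₁ : η₁ ∈ G := Subgroup.subset_closure (by simp)
  have h₂ : η₂ ∈ G := Subgroup.subset_closure (by simp)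
  have h₃ : η₃ ∈ G := Subgroup.subset_closure (by simp)
  refine le_antisymm ?_ ?_
  · rw [Subgroup.closure_le]
    rintro _ (rfl | rfl | rfl) <;> exact mem_alternatingGroup.2 (by decide)
  · have h2 : IsMultiplyPretransitive G Δ 2 :=
      isMultiplyPretransitive_two_of_isCycle_mem (mul_mem (mul_mem h₁ h₂) h₃)
        isCycle_η₁_mul_η₂_mul_η₃ support_η₁_mul_η₂_mul_η₃ h₂ (by decide)
    exact alternatingGroup_le_of_isPreprimitive_of_isThreeCycle_mem
      (isPreprimitive_of_is_two_pretransitive h2) isThreeCycle_η₁_mul_η₂_sq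
      (pow_mem (mul_mem h₁ h₂) 2)

end Delta

open Delta in
/-- The permutations η₁ = (2,5)(4,8), η₂ = (1,6)(4,9), η₃ = (1,3)(2,8)(4,9)(5,6)
generate the full alternating group on Δ = {1,2,3,4,5,6,8,9}, viewed inside the
permutations of {1,…,12} (here modelled by `Fin 12`, with `12 = 0`). -/
theorem eta_generate_alternating_on_Delta :
    Subgroup.closure
        ({[(2 : Fin 12), 5].formPerm * [(4 : Fin 12), 8].formPerm,
          [(1 : Fin 12), 6].formPerm * [(4 : Fin 12), 9].formPerm,
          [(1 : Fin 12), 3].formPerm * [(2 : Fin 12), 8].formPerm *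
            [(4 : Fin 12), 9].formPerm * [(5 : Fin 12), 6].formPerm} :
          Set (Equiv.Perm (Fin 12)))
      = alternatingGroup (Fin 12) ⊓
          ⨅ i ∈ ({7, 10, 11, 12} : Set (Fin 12)),
            MulAction.stabilizer (Equiv.Perm (Fin 12)) i := by
  rw [← image_ofSubtype_η, ← MonoidHom.map_closure, closure_η_eq_alternatingGroup,
    alternatingGroup.map_ofSubtype, range_ofSubtype_eq_iInf_stabilizer, coe_Δ_compl, inf_comm]
end

section
/- The permutations g = (3,10,8), y = (1,2,3)(4,5,6)(7,8,9)(10,11,12) of {1,...,12}, together with the full alternating group on the subset {1,2,3,4,5,6,8,9} (embedded as permutations of {1,...,12} fixing the other points), generate the alternating group A_12 on {1,...,12}. -/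
open Equiv List

/-!
A₁₂ is generated by its 3-cycles, so it suffices to show that every 3-cycle σ lies in
H = ⟨g, y, Alt(Δ)⟩. One of nine explicit words u in g, y and three 3-cycles of Alt(Δ) maps
the support of σ into Δ; then u σ u⁻¹ is a 3-cycle supported in Δ, hence lies in Alt(Δ) ≤ H,
and σ = u⁻¹ (u σ u⁻¹) u ∈ H.
-/

theorem Equiv.Perm.alternatingGroup_le_of_conj_avoids {α : Type*} [Fintype α] [DecidableEq α]
    {H : Subgroup (Perm α)} {Γ : Set α}
    (hfix : ∀ σ ∈ alternatingGroup α, (∀ i ∈ Γ, σ i = i) → σ ∈ H)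
    (hconj : ∀ s : Finset α, s.card = 3 → ∃ u ∈ H, ∀ x ∈ s, u x ∉ Γ) :
    alternatingGroup α ≤ H := by
  rw [← closure_three_cycles_eq_alternating, Subgroup.closure_le]
  intro σ hσ
  obtain ⟨u, hu, hs⟩ := hconj σ.support hσ.card_support
  have hτ : u * σ * u⁻¹ ∈ H := by
    refine hfix _ (alternatingGroup.normal.conj_mem σ hσ.mem_alternatingGroup u)
      fun i hi => Perm.notMem_support.1 fun hi' => ?_
    rw [Perm.support_conj, Finset.mem_map] at hi'
    obtain ⟨x, hx, rfl⟩ := hi'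
    exact hs x hx hi
  simpa [mul_assoc] using H.mul_mem (H.mul_mem (H.inv_mem hu) hτ) hu

namespace A12Generation

def g : Perm (Fin 12) := [(3 : Fin 12), 10, 8].formPerm

def y : Perm (Fin 12) :=
  [(1 : Fin 12), 2, 3].formPerm * [(4 : Fin 12), 5, 6].formPerm *
    [(7 : Fin 12), 8, 9].formPerm * [(10 : Fin 12), 11, 12].formPerm

def generators : Set (Perm (Fin 12)) :=
  {g, y} ∪ {σ | σ ∈ alternatingGroup (Fin 12) ∧ ∀ i ∈ ({7, 10, 11, 12} : Set (Fin 12)), σ i = i}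

theorem mem_closure_generators_of_sign_eq_one {σ : Perm (Fin 12)} (hsign : Perm.sign σ = 1)
    (hfix : σ 7 = 7 ∧ σ 10 = 10 ∧ σ 11 = 11 ∧ σ 12 = 12) :
    σ ∈ Subgroup.closure generators := by
  refine Subgroup.subset_closure (Or.inr ⟨hsign, ?_⟩)
  simp only [Set.mem_insert_iff, Set.mem_singleton_iff]
  rintro i (rfl | rfl | rfl | rfl) <;> simp only [hfix]

def a : Perm (Fin 12) := [(2 : Fin 12), 4, 5].formPerm

def b : Perm (Fin 12) := [(3 : Fin 12), 4, 5].formPerm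

def c : Perm (Fin 12) := [(1 : Fin 12), 4, 5].formPerm

/-- Found by a computer search. -/
def conjugators : List (Perm (Fin 12)) :=
  [1, g * y * g * y * g * g, g * y * g * b * a, y⁻¹ * g * g * b * y⁻¹ * g,
    g * y * g * b * a * y, g * b * y * g * y⁻¹, g * y⁻¹ * c * g * y⁻¹,
    y⁻¹ * g * g * y * g * g, g * g * y * g * y * g]

theorem conjugators_mem_closure : ∀ u ∈ conjugators, u ∈ Subgroup.closure generators := by
  have hg : g ∈ Subgroup.closure generators := Subgroup.subset_closure (Or.inl (Or.inl rfl))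
  have hy : y ∈ Subgroup.closure generators := Subgroup.subset_closure (Or.inl (Or.inr rfl))
  have ha : a ∈ Subgroup.closure generators :=
    mem_closure_generators_of_sign_eq_one (by decide) (by decide)
  have hb : b ∈ Subgroup.closure generators :=
    mem_closure_generators_of_sign_eq_one (by decide) (by decide)
  have hc : c ∈ Subgroup.closure generators :=
    mem_closure_generators_of_sign_eq_one (by decide) (by decide)
  simp only [conjugators, List.forall_mem_cons, List.not_mem_nil, IsEmpty.forall_iff,
    implies_true, and_true]
  refine ⟨one_mem _, ?_⟩
  -- reducible transparency keeps `mul_mem` from unfolding the letters `g`, `y`, `a`, … themselves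
  and_intros <;>
    repeat' first | with_reducible assumption | with_reducible apply mul_mem |
      with_reducible apply inv_mem

set_option maxRecDepth 10000 in
theorem exists_conjugator_avoids : ∀ p q r : Fin 12, p ≠ q → p ≠ r → q ≠ r →
    ∃ u ∈ conjugators, ∀ x ∈ [p, q, r], u x ∉ [7, 10, 11, 12] := by
  decide

theorem closure_generators_le : Subgroup.closure generators ≤ alternatingGroup (Fin 12) := by
  rw [Subgroup.closure_le]
  rintro σ ((rfl | rfl) | hσ)
  · exact Perm.mem_alternatingGroup.2 (by decide)
  · exact Perm.mem_alternatingGroup.2 (by decide)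
  · exact hσ.1

theorem alternatingGroup_le_closure_generators :
    alternatingGroup (Fin 12) ≤ Subgroup.closure generators := by
  refine Perm.alternatingGroup_le_of_conj_avoids (Γ := {7, 10, 11, 12})
    (fun σ hσ hfix => Subgroup.subset_closure (Or.inr ⟨hσ, hfix⟩)) fun s hs => ?_
  obtain ⟨p, q, r, hpq, hpr, hqr, rfl⟩ := Finset.card_eq_three.1 hs
  obtain ⟨u, hu, havoid⟩ := exists_conjugator_avoids p q r hpq hpr hqr
  refine ⟨u, conjugators_mem_closure u hu, fun x hx => ?_⟩
  simpa using havoid x (by simpa using hx)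

end A12Generation

/-- {1,…,12} is modelled by `Fin 12`, in which `12 = 0`. -/
theorem g_y_and_altDelta_generate_A12 :
    Subgroup.closure
        (({[(3 : Fin 12), 10, 8].formPerm,
           [(1 : Fin 12), 2, 3].formPerm * [(4 : Fin 12), 5, 6].formPerm *
             [(7 : Fin 12), 8, 9].formPerm * [(10 : Fin 12), 11, 12].formPerm} :
            Set (Equiv.Perm (Fin 12)))
          ∪ {σ : Equiv.Perm (Fin 12) | σ ∈ alternatingGroup (Fin 12) ∧
              ∀ i ∈ ({7, 10, 11, 12} : Set (Fin 12)), σ i = i})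
      = alternatingGroup (Fin 12) :=
  le_antisymm A12Generation.closure_generators_le A12Generation.alternatingGroup_le_closure_generators
end
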